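/- arXiv:2504.04847 — 3 statements merged into one kernel-verified Lean document; each statement's English description precedes it below -/
import Mathlib

section
/- For the 1-periodic extension of the hat function H and any positive integer m, the composition of H with itself m times equals x ↦ H(2^{m-1} x) on [0,1]; consequently C_{2^m}(x) = C(H∘⋯∘H(x)) (m-fold composition) for x ∈ [0,1]. -/
/-- 1-periodic extension of the hat function `H(x) = 2x` on `[0,1/2]`,
`H(x) = 2(1-x)` on `(1/2,1]`. -/
noncomputable def Hper (y : ℝ) : ℝ :=
  if Int.fract y ≤ 1/2 then 2 * Int.fract y else 2 * (1 - Int.fract y)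

/-- 1-periodic extension of `C(x) = 4|x - 1/2| - 1`. -/
noncomputable def Cper (y : ℝ) : ℝ := 4 * |Int.fract y - 1/2| - 1

lemma Hper_congr {a b : ℝ} (h : Int.fract a = Int.fract b) : Hper a = Hper b := by
  unfold Hper; rw [h]

lemma Cper_congr {a b : ℝ} (h : Int.fract a = Int.fract b) : Cper a = Cper b := by
  unfold Cper; rw [h]

lemma fract_two_mul (y : ℝ) : Int.fract (2 * y) = Int.fract (2 * Int.fract y) := by
  have : 2 * y = 2 * Int.fract y + (2 * ⌊y⌋ : ℤ) := by
    rw [Int.fract]; push_cast; ring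
  rw [this, Int.fract_add_intCast]

lemma hper_hper (y : ℝ) : Hper (Hper y) = Hper (2 * y) := by
  have ht0 := Int.fract_nonneg y
  have ht1 := Int.fract_lt_one y
  set t := Int.fract y with htdef
  have h2y : Int.fract (2 * y) = Int.fract (2 * t) := fract_two_mul y
  by_cases h1 : t ≤ 1/2
  · have hH : Hper y = 2 * t := by unfold Hper; rw [← htdef, if_pos h1]
    rw [hH]
    exact Hper_congr h2y.symm
  · push_neg at h1
    have hH : Hper y = 2 * (1 - t) := by
      unfold Hper; rw [← htdef, if_neg (by linarith)]
    have hf1 : Int.fract (2 * t) = 2 * t - 1 := by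
      rw [show (2 * t : ℝ) = (2 * t - 1) + ((1 : ℤ) : ℝ) by norm_num,
        Int.fract_add_intCast, Int.fract_eq_self.mpr ⟨by linarith, by linarith⟩]
      push_cast; ring
    have hf2 : Int.fract (2 * (1 - t)) = 2 - 2 * t := by
      rw [Int.fract_eq_self.mpr ⟨by linarith, by linarith⟩]; ring
    rw [hH]
    unfold Hper
    rw [h2y, hf1, hf2]
    by_cases h2 : t ≤ 3/4
    · by_cases h3 : t < 3/4
      · rw [if_neg (by linarith), if_pos (by linarith)]; ring
      · have : t = 3/4 := le_antisymm h2 (not_lt.mp h3)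
        rw [this]; norm_num
    · push_neg at h2
      rw [if_pos (by linarith), if_neg (by linarith)]; ring

lemma cper_hper (y : ℝ) : Cper (2 * y) = Cper (Hper y) := by
  have ht0 := Int.fract_nonneg y
  have ht1 := Int.fract_lt_one y
  set t := Int.fract y with htdef
  have h2y : Int.fract (2 * y) = Int.fract (2 * t) := fract_two_mul y
  by_cases h1 : t ≤ 1/2
  · have hH : Hper y = 2 * t := by unfold Hper; rw [← htdef, if_pos h1]
    rw [hH]
    exact Cper_congr h2y
  · push_neg at h1
    have hH : Hper y = 2 * (1 - t) := by
      unfold Hper; rw [← htdef, if_neg (by linarith)]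
    have hf1 : Int.fract (2 * t) = 2 * t - 1 := by
      rw [show (2 * t : ℝ) = (2 * t - 1) + ((1 : ℤ) : ℝ) by norm_num,
        Int.fract_add_intCast, Int.fract_eq_self.mpr ⟨by linarith, by linarith⟩]
      push_cast; ring
    have hf2 : Int.fract (2 * (1 - t)) = 2 - 2 * t := by
      rw [Int.fract_eq_self.mpr ⟨by linarith, by linarith⟩]; ring
    rw [hH]
    unfold Cper
    rw [h2y, hf1, hf2]
    have : |2 * t - 1 - 1/2| = |2 - 2 * t - 1/2| := by
      rw [abs_sub_comm]; congr 1; ring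
    rw [this]

lemma hper_iter (m : ℕ) (hm : 1 ≤ m) (x : ℝ) :
    Hper^[m] x = Hper (2 ^ (m - 1) * x) := by
  induction m with
  | zero => omega
  | succ n ih =>
    rcases Nat.eq_or_lt_of_le hm with h | h
    · simp [← h]
    · have hn : 1 ≤ n := by omega
      rw [Function.iterate_succ_apply', ih hn, hper_hper,
        show (2 : ℝ) * (2 ^ (n - 1) * x) = 2 ^ (n + 1 - 1) * x by
          rw [show n + 1 - 1 = (n - 1) + 1 by omega]; ring]

theorem stmt_6 (m : ℕ) (hm : 1 ≤ m) (x : ℝ) (hx : x ∈ Set.Icc (0:ℝ) 1) :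
    Hper^[m] x = Hper (2^(m-1) * x) ∧ Cper (2^m * x) = Cper (Hper^[m] x) := by
  refine ⟨hper_iter m hm x, ?_⟩
  rw [hper_iter m hm x, ← cper_hper,
    show (2 : ℝ) * (2 ^ (m - 1) * x) = 2 ^ m * x by
      rw [show m = (m - 1) + 1 by omega]; push_cast; ring]
end

section
/- There exists an absolute constant c₂ > 0 such that for every d ≥ 1 and every 0 < t ≤ √d/2, the number of integer lattice points in the d-dimensional Euclidean ball of radius t satisfies N(t,d) ≤ (c₂ d / t²)^{t²}. -/
/-- Number of lattice points `k ∈ ℤ^d` with `‖k‖₂ ≤ t`. -/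
noncomputable def latticeCount (d : ℕ) (t : ℝ) : ℕ :=
  Nat.card {k : Fin d → ℤ // (∑ i, ((k i : ℝ))^2) ≤ t^2}

/-!
Since `k i ^ 2 ≥ |k i|` for integers, the lattice points of the ball of radius `t` lie in the
`ℓ¹`-ball of radius `m = ⌊t²⌋`. Splitting every coordinate into its positive and negative part
and adding one slack coordinate turns such a point into a composition of `m` into `2d + 1` parts,
so there are at most `C(2d + m, m) ≤ (e (2d + m) / m) ^ m` of them. For `t² ≤ d / 4` this is
at most `(18 d / t²) ^ m`, and the base is at least `1`, so the exponent `m` may be raised to `t²`.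
-/

open Real
open scoped Nat

section L1Ball

variable (ι : Type*) [Fintype ι] (m : ℕ)

def natAbsSumLeEmbedding :
    {k : ι → ℤ // ∑ i, (k i).natAbs ≤ m} ↪ {P : Option (ι ⊕ ι) → ℕ // ∑ a, P a = m} where
  toFun k := ⟨fun a => a.elim (m - ∑ i, (k.1 i).natAbs)
      (Sum.elim (fun i => (k.1 i).toNat) (fun i => (-k.1 i).toNat)), by
    have hsplit : ∀ i, (k.1 i).toNat + (-k.1 i).toNat = (k.1 i).natAbs := fun i => by omega
    simp only [Fintype.sum_option, Option.elim_none, Option.elim_some, Fintype.sum_sum_type,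
      Sum.elim_inl, Sum.elim_inr, ← Finset.sum_add_distrib, hsplit]
    exact Nat.sub_add_cancel k.2⟩
  inj' k l hkl := by
    ext i
    have hpos := congrFun (congrArg Subtype.val hkl) (some (.inl i))
    have hneg := congrFun (congrArg Subtype.val hkl) (some (.inr i))
    simp only [Option.elim_some, Sum.elim_inl, Sum.elim_inr] at hpos hneg
    omega

instance finite_natAbsSumLe : Finite {k : ι → ℤ // ∑ i, (k i).natAbs ≤ m} := by
  classical
  exact .of_injective _
    ((Sym.equivNatSumOfFintype _ m).symm.injective.comp (natAbsSumLeEmbedding ι m).injective)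

theorem natCard_natAbsSumLe_le_choose :
    Nat.card {k : ι → ℤ // ∑ i, (k i).natAbs ≤ m} ≤ (2 * Fintype.card ι + m).choose m := by
  classical
  calc Nat.card {k : ι → ℤ // ∑ i, (k i).natAbs ≤ m}
      ≤ Nat.card (Sym (Option (ι ⊕ ι)) m) := Nat.card_le_card_of_injective _
        ((Sym.equivNatSumOfFintype _ m).symm.injective.comp (natAbsSumLeEmbedding ι m).injective)
    _ = (2 * Fintype.card ι + m).choose m := by
        rw [Sym.natCard_sym_eq_choose, Nat.card_eq_fintype_card, Fintype.card_option,
          Fintype.card_sum]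
        congr 1
        omega

end L1Ball

theorem Nat.choose_le_exp_one_mul_div_pow (n k : ℕ) :
    (n.choose k : ℝ) ≤ (exp 1 * n / k) ^ k :=
  calc (n.choose k : ℝ)
      ≤ (n : ℝ) ^ k / k ! := Nat.choose_le_pow_div k n
    _ = ((n : ℝ) / k) ^ k * ((k : ℝ) ^ k / k !) := by
        rw [div_pow]
        field_simp
    _ ≤ ((n : ℝ) / k) ^ k * exp k := by
        gcongr
        exact Real.pow_div_factorial_le_exp _ (Nat.cast_nonneg k) k
    _ = (exp 1 * n / k) ^ k := by rw [← Real.exp_one_pow, mul_div_assoc, mul_pow, mul_comm]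

theorem latticeCount_le_natCard_natAbsSumLe (d : ℕ) (t : ℝ) :
    latticeCount d t ≤ Nat.card {k : Fin d → ℤ // ∑ i, (k i).natAbs ≤ ⌊t ^ 2⌋₊} := by
  refine Nat.card_le_card_of_injective (fun k => ⟨k.1, Nat.le_floor ?_⟩) fun k l h => ?_
  · calc ((∑ i, (k.1 i).natAbs : ℕ) : ℝ)
        = ∑ i, |(k.1 i : ℝ)| := by push_cast [Nat.cast_natAbs]; rfl
      _ ≤ ∑ i, (k.1 i : ℝ) ^ 2 := by
        gcongr with i
        have h := Int.le_self_sq |k.1 i|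
        rw [sq_abs] at h
        exact_mod_cast h
      _ ≤ t ^ 2 := k.2
  · exact Subtype.ext (Subtype.mk.inj h)

theorem exp_one_mul_div_floor_le {d s : ℝ} (hs : 0 < s) (hsd : s ≤ d / 4) (hm : 1 ≤ ⌊s⌋₊) :
    exp 1 * (2 * d + ⌊s⌋₊) / ⌊s⌋₊ ≤ 18 * d / s := by
  have hm_le : (⌊s⌋₊ : ℝ) ≤ s := Nat.floor_le hs.le
  have hm_pos : (1 : ℝ) ≤ ⌊s⌋₊ := by exact_mod_cast hm
  have hs_le : s ≤ 2 * ⌊s⌋₊ := by linarith [Nat.lt_floor_add_one s]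
  have hd : 0 ≤ d := by linarith
  rw [div_le_div_iff₀ (by positivity) hs]
  calc exp 1 * (2 * d + ⌊s⌋₊) * s
      ≤ 3 * (3 * d) * (2 * ⌊s⌋₊) := by
        gcongr
        · exact Real.exp_one_lt_three.le
        · linarith
    _ = 18 * d * ⌊s⌋₊ := by ring

theorem stmt_9 :
    ∃ c₂ : ℝ, 0 < c₂ ∧ ∀ d : ℕ, 1 ≤ d → ∀ t : ℝ, 0 < t → t ≤ Real.sqrt d / 2 →
      (latticeCount d t : ℝ) ≤ (c₂ * d / t^2) ^ (t^2) := by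
  refine ⟨18, by norm_num, fun d _ t ht htd => ?_⟩
  set m := ⌊t ^ 2⌋₊
  have ht2 : 0 < t ^ 2 := by positivity
  have htd2 : t ^ 2 ≤ d / 4 := by
    have := pow_le_pow_left₀ ht.le htd 2
    rwa [div_pow, Real.sq_sqrt (Nat.cast_nonneg d), show (2 : ℝ) ^ 2 = 4 by norm_num] at this
  have hbase : 1 ≤ 18 * (d : ℝ) / t ^ 2 := by
    rw [le_div_iff₀ ht2]
    linarith
  calc (latticeCount d t : ℝ)
      ≤ ((2 * d + m).choose m : ℝ) := by
        have := (latticeCount_le_natCard_natAbsSumLe d t).trans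
          (natCard_natAbsSumLe_le_choose (Fin d) m)
        rw [Fintype.card_fin] at this
        exact_mod_cast this
    _ ≤ (exp 1 * (2 * d + m : ℕ) / m) ^ m := Nat.choose_le_exp_one_mul_div_pow _ _
    _ ≤ (18 * d / t ^ 2) ^ m := by
        rcases Nat.eq_zero_or_pos m with hm | hm
        · simp [hm]
        · push_cast
          exact pow_le_pow_left₀ (by positivity) (exp_one_mul_div_floor_le ht2 htd2 hm) m
    _ ≤ (18 * d / t ^ 2) ^ (t ^ 2) := by
        rw [← Real.rpow_natCast]
        exact Real.rpow_le_rpow_of_exponent_le hbase (Nat.floor_le ht2.le)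
end

section
/- Let s ≥ 0 and let b_s^1 be the space of sequences α = (α_k)_{k≥1} with ‖α‖ := ∑_{k=1}^∞ k^s|α_k| < ∞. Then the best n-term approximation error in ℓ₂ satisfies σ_n(α) := (∑_{k=n+1}^∞ (α*_k)²)^{1/2} ≤ (s+1)/√(2s+1) · n^{-s-1/2} · ‖α‖ for every n ≥ 1, where α* is the non-increasing rearrangement of (|α_k|). -/
/-!
Write `A = ∑ k^s |α_k|`. Since `α*` is non-increasing and `σ` is injective, the `m` largest
entries `α*_1 ≥ … ≥ α*_m` sit at `m` distinct positions, whose weights `k^s` sum to at least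
`∑_{k ≤ m} k^s ≥ m^{s+1}/(s+1)`; hence `m^{s+1} α*_m ≤ (s+1) A`. Squaring and summing this decay
bound over `m > n` and comparing with `∫_n^∞ x^{-(2s+2)} dx = n^{-(2s+1)}/(2s+1)` gives the claim.
-/

open Finset Real

lemma rpow_add_one_le_mul_sum_range_rpow {s : ℝ} (hs : 0 ≤ s) (k : ℕ) :
    (k : ℝ) ^ (s + 1) ≤ (s + 1) * ∑ i ∈ range k, ((i + 1 : ℕ) : ℝ) ^ s := by
  have hmono : MonotoneOn (fun x : ℝ => x ^ s) (Set.Icc 0 (0 + k)) :=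
    fun x hx y _ hxy => rpow_le_rpow hx.1 hxy hs
  have h := hmono.integral_le_sum
  rw [integral_rpow (by left; linarith), zero_add, zero_rpow (by linarith), sub_zero,
    div_le_iff₀ (by linarith)] at h
  simpa [mul_comm] using h

lemma sum_range_rpow_neg_le {q x : ℝ} (hq : 0 < q) (hx : 0 < x) (m : ℕ) :
    ∑ i ∈ range m, (x + (i + 1 : ℕ)) ^ (-(q + 1)) ≤ x ^ (-q) / q := by
  have hanti : AntitoneOn (fun y : ℝ => y ^ (-(q + 1))) (Set.Icc x (x + m)) :=
    fun y hy z _ hyz => rpow_le_rpow_of_nonpos (hx.trans_le hy.1) hyz (by linarith)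
  have hx0 : (0 : ℝ) ∉ Set.uIcc x (x + m) := by
    rw [Set.uIcc_of_le (le_add_of_nonneg_right m.cast_nonneg)]; exact fun h => hx.not_ge h.1
  refine hanti.sum_le_integral.trans ?_
  rw [integral_rpow (Or.inr ⟨by linarith, hx0⟩), show -(q + 1) + 1 = -q by ring,
    div_neg, ← neg_div, neg_sub]
  gcongr
  exact sub_le_self _ (by positivity)

lemma sum_range_le_sum_of_card_eq {M : Type*} [AddCommMonoid M] [PartialOrder M]
    [IsOrderedAddMonoid M] {g : ℕ → M} (hg : Monotone g) :
    ∀ {k : ℕ} {T : Finset ℕ}, T.card = k → ∑ i ∈ range k, g i ≤ ∑ i ∈ T, g i := by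
  intro k
  induction k with
  | zero => intro T hT; simp [card_eq_zero.mp hT]
  | succ k ih =>
    intro T hT
    have hne : T.Nonempty := card_pos.mp (by omega)
    have hmem := T.max'_mem hne
    have hk : k ≤ T.max' hne := by
      by_contra! h
      have : T ⊆ range k := fun x hx => mem_range.mpr ((T.le_max' x hx).trans_lt h)
      simpa [hT] using card_le_card this
    calc ∑ i ∈ range (k + 1), g i = ∑ i ∈ range k, g i + g k := sum_range_succ g k
      _ ≤ ∑ i ∈ T.erase (T.max' hne), g i + g (T.max' hne) :=
          add_le_add (ih (by rw [card_erase_of_mem hmem, hT]; rfl)) (hg hk)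
      _ = ∑ i ∈ T, g i := sum_erase_add T g hmem

lemma tsum_sq_comp_add_le_of_abs_le_mul_rpow {a : ℕ → ℝ} {C p : ℝ} (hp : 1 / 2 < p)
    (ha : ∀ m, |a m| ≤ C * ((m + 1 : ℕ) : ℝ) ^ (-p)) {n : ℕ} (hn : 0 < n) :
    ∑' j, a (n + j) ^ 2 ≤ C ^ 2 * ((n : ℝ) ^ (-(2 * p - 1)) / (2 * p - 1)) := by
  refine Real.tsum_le_of_sum_range_le (fun _ => sq_nonneg _) fun m => ?_
  have hterm : ∀ j, a (n + j) ^ 2 ≤ C ^ 2 * ((n : ℝ) + (j + 1 : ℕ)) ^ (-(2 * p - 1 + 1)) := by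
    intro j
    calc a (n + j) ^ 2 = |a (n + j)| ^ 2 := (sq_abs _).symm
      _ ≤ (C * ((n + j + 1 : ℕ) : ℝ) ^ (-p)) ^ 2 := pow_le_pow_left₀ (abs_nonneg _) (ha _) 2
      _ = C ^ 2 * ((n : ℝ) + (j + 1 : ℕ)) ^ (-(2 * p - 1 + 1)) := by
        rw [mul_pow, ← rpow_mul_natCast (by positivity)]; push_cast; ring_nf
  calc ∑ j ∈ range m, a (n + j) ^ 2
      ≤ C ^ 2 * ∑ j ∈ range m, ((n : ℝ) + (j + 1 : ℕ)) ^ (-(2 * p - 1 + 1)) := by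
        rw [mul_sum]; exact sum_le_sum fun j _ => hterm j
    _ ≤ C ^ 2 * ((n : ℝ) ^ (-(2 * p - 1)) / (2 * p - 1)) := by
        gcongr
        exact sum_range_rpow_neg_le (by linarith) (by exact_mod_cast hn) m

section Rearrangement

variable {s : ℝ} {α αstar : ℕ → ℝ} {σ : Equiv.Perm ℕ}

lemma sum_range_rpow_mul_rearrangement_le
    (hsum : Summable (fun j : ℕ => ((j + 1 : ℕ) : ℝ) ^ s * |α j|))
    (hrearr : ∀ j, αstar j = |α (σ j)|) (m : ℕ) :
    ∑ j ∈ range m, ((σ j + 1 : ℕ) : ℝ) ^ s * αstar j ≤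
      ∑' j : ℕ, ((j + 1 : ℕ) : ℝ) ^ s * |α j| := by
  have h := sum_le_hasSum ((range m).map σ.toEmbedding) (fun i _ => by positivity) hsum.hasSum
  simpa [hrearr] using h

lemma rpow_add_one_mul_rearrangement_le (hs : 0 ≤ s)
    (hsum : Summable (fun j : ℕ => ((j + 1 : ℕ) : ℝ) ^ s * |α j|))
    (hrearr : ∀ j, αstar j = |α (σ j)|) (hanti : Antitone αstar) (m : ℕ) :
    ((m + 1 : ℕ) : ℝ) ^ (s + 1) * αstar m ≤ (s + 1) * ∑' j : ℕ, ((j + 1 : ℕ) : ℝ) ^ s * |α j| := by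
  have hnonneg : ∀ j, 0 ≤ αstar j := fun j => (hrearr j).symm ▸ abs_nonneg _
  have hweights : ∑ i ∈ range (m + 1), ((i + 1 : ℕ) : ℝ) ^ s ≤
      ∑ j ∈ range (m + 1), ((σ j + 1 : ℕ) : ℝ) ^ s := by
    have h := sum_range_le_sum_of_card_eq (g := fun i : ℕ => ((i + 1 : ℕ) : ℝ) ^ s)
      (fun i j hij => rpow_le_rpow (by positivity) (by gcongr) hs)
      (k := m + 1) (T := (range (m + 1)).map σ.toEmbedding) (by simp)
    simpa using h
  calc ((m + 1 : ℕ) : ℝ) ^ (s + 1) * αstar m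
      ≤ (s + 1) * ∑ i ∈ range (m + 1), ((i + 1 : ℕ) : ℝ) ^ s * αstar m := by
        rw [← sum_mul, ← mul_assoc]
        exact mul_le_mul_of_nonneg_right (rpow_add_one_le_mul_sum_range_rpow hs _) (hnonneg m)
    _ ≤ (s + 1) * ∑ j ∈ range (m + 1), ((σ j + 1 : ℕ) : ℝ) ^ s * αstar m := by
        rw [← sum_mul, ← sum_mul]; gcongr
        exact hnonneg m
    _ ≤ (s + 1) * ∑ j ∈ range (m + 1), ((σ j + 1 : ℕ) : ℝ) ^ s * αstar j := by
        gcongr with j hj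
        exact hanti (Nat.lt_succ_iff.mp (mem_range.mp hj))
    _ ≤ (s + 1) * ∑' j : ℕ, ((j + 1 : ℕ) : ℝ) ^ s * |α j| := by
        gcongr
        exact sum_range_rpow_mul_rearrangement_le hsum hrearr _

end Rearrangement

/-- The sequence `(α_k)_{k ≥ 1}` is modelled as `α : ℕ → ℝ`, with `α j` standing for `α_{j+1}`. -/
theorem stmt_14 (s : ℝ) (hs : 0 ≤ s) (α αstar : ℕ → ℝ)
    (hsum : Summable (fun j : ℕ => ((j+1 : ℕ) : ℝ)^s * |α j|))
    (σ : Equiv.Perm ℕ) (hrearr : ∀ j, αstar j = |α (σ j)|) (hanti : Antitone αstar)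
    (n : ℕ) (hn : 1 ≤ n) :
    Real.sqrt (∑' j : ℕ, (αstar (n + j))^2) ≤
      (s+1) / Real.sqrt (2*s+1) * (n : ℝ) ^ (-(s+1/2)) *
        ∑' j : ℕ, ((j+1 : ℕ) : ℝ)^s * |α j| := by
  set A := ∑' j : ℕ, ((j + 1 : ℕ) : ℝ) ^ s * |α j|
  have hA : 0 ≤ A := tsum_nonneg fun j => by positivity
  have hdecay : ∀ m, |αstar m| ≤ (s + 1) * A * ((m + 1 : ℕ) : ℝ) ^ (-(s + 1)) := by
    intro m
    rw [abs_of_nonneg (by rw [hrearr]; positivity), rpow_neg (by positivity), ← div_eq_mul_inv,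
      le_div_iff₀ (by positivity), mul_comm]
    exact rpow_add_one_mul_rearrangement_le hs hsum hrearr hanti m
  have htail := tsum_sq_comp_add_le_of_abs_le_mul_rpow (by linarith) hdecay hn
  rw [Real.sqrt_le_iff]
  refine ⟨by positivity, htail.trans_eq ?_⟩
  have hsqrt : √(2 * s + 1) ^ 2 = 2 * s + 1 := sq_sqrt (by linarith)
  have hpow : ((n : ℝ) ^ (-(s + 1 / 2))) ^ 2 = (n : ℝ) ^ (-(2 * (s + 1) - 1)) := by
    rw [← rpow_mul_natCast (by positivity)]; ring_nf
  rw [show ((s + 1) / √(2 * s + 1) * (n : ℝ) ^ (-(s + 1 / 2)) * A) ^ 2 =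
      (s + 1) ^ 2 / √(2 * s + 1) ^ 2 * ((n : ℝ) ^ (-(s + 1 / 2))) ^ 2 * A ^ 2 by ring,
    hsqrt, hpow]
  ring
end
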